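/- arXiv:1302.1035 — 4 statements merged into one kernel-verified Lean document; each statement's English description precedes it below -/
import Mathlib

section
/- Let F be a finite field, n a natural number, and C a linear subspace of (Fin n → F). For v₁, v₂ : Fin n → F define the two-block CSS basis state Ψ_{v₁,v₂} : ((Fin n → F) × (Fin n → F)) → ℂ by Ψ_{v₁,v₂}(x, y) = ψ_{v₁}(x) · ψ_{v₂}(y), where ψ_v = (Fintype.card C : ℝ)^(-1/2) • ∑_{c ∈ C} e_{c+v}. Let U be the linear map on (((Fin n → F) × (Fin n → F)) → ℂ) induced by the basis permutation (x, y) ↦ (x, x + y) (the transversal CNOT). Then U Ψ_{v₁,v₂} = Ψ_{v₁, v₁+v₂}. -/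
/-! Up to the normalisation `|C|⁻¹`, `Ψ_{v₁,v₂}` is the sum of `e_{(c + v₁, d + v₂)}` over `c, d ∈ C`.
CNOT sends this term to `e_{(c + v₁, (c + d) + v₁ + v₂)}`, and for fixed `c` the translation
`d ↦ c + d` permutes `C`, so the image is the same sum for `(v₁, v₁ + v₂)`. -/

open scoped Classical

/-- The standard basis vector `e_x` of `(Fin n → F) → ℂ` supported at `x`. -/
noncomputable def stdVec {F : Type*} [Field F] {n : ℕ} (x : Fin n → F) :
    (Fin n → F) → ℂ :=
  fun y => if y = x then 1 else 0

/-- The CSS basis state `ψ_v = |C|^(-1/2) ∑_{c ∈ C} e_{c+v}`. -/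
noncomputable def psi {F : Type*} [Field F] [Fintype F] {n : ℕ}
    (C : Submodule F (Fin n → F)) (v : Fin n → F) : (Fin n → F) → ℂ :=
  ((Fintype.card C : ℝ) ^ (-(1 : ℝ)/2)) • ∑ c : C, stdVec ((c : Fin n → F) + v)

/-- The standard basis vector of the two-block space, supported at `p`. -/
noncomputable def stdVec2 {F : Type*} [Field F] {n : ℕ}
    (p : (Fin n → F) × (Fin n → F)) : ((Fin n → F) × (Fin n → F)) → ℂ :=
  fun q => if q = p then 1 else 0

/-- The two-block CSS basis state `Ψ_{v₁,v₂}(x, y) = ψ_{v₁}(x) · ψ_{v₂}(y)`. -/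
noncomputable def psi2 {F : Type*} [Field F] [Fintype F] {n : ℕ}
    (C : Submodule F (Fin n → F)) (v₁ v₂ : Fin n → F) :
    ((Fin n → F) × (Fin n → F)) → ℂ :=
  fun p => psi C v₁ p.1 * psi C v₂ p.2

section

variable {F : Type*} [Field F] {n : ℕ}

theorem stdVec_mul_stdVec (x y : Fin n → F) (p : (Fin n → F) × (Fin n → F)) :
    stdVec x p.1 * stdVec y p.2 = stdVec2 (x, y) p := by
  simp only [stdVec, stdVec2, Prod.ext_iff, ite_and, ite_mul, one_mul, zero_mul]

variable [Fintype F]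

theorem psi2_eq_smul_sum (C : Submodule F (Fin n → F)) (v₁ v₂ : Fin n → F) :
    psi2 C v₁ v₂ = ((Fintype.card C : ℝ) ^ (-(1 : ℝ)/2) * (Fintype.card C : ℝ) ^ (-(1 : ℝ)/2)) •
      ∑ c : C, ∑ d : C, stdVec2 ((c : Fin n → F) + v₁, (d : Fin n → F) + v₂) := by
  funext p
  simp only [psi2, psi, Pi.smul_apply, Finset.sum_apply, Complex.real_smul, Complex.ofReal_mul,
    mul_mul_mul_comm, Finset.sum_mul_sum, stdVec_mul_stdVec]

theorem map_sum_stdVec2_of_cnot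
    (U : (((Fin n → F) × (Fin n → F)) → ℂ) →ₗ[ℂ] (((Fin n → F) × (Fin n → F)) → ℂ))
    (hU : ∀ p : (Fin n → F) × (Fin n → F), U (stdVec2 p) = stdVec2 (p.1, p.1 + p.2))
    (C : Submodule F (Fin n → F)) (v₁ v₂ : Fin n → F) :
    U (∑ c : C, ∑ d : C, stdVec2 ((c : Fin n → F) + v₁, (d : Fin n → F) + v₂)) =
      ∑ c : C, ∑ d : C, stdVec2 ((c : Fin n → F) + v₁, (d : Fin n → F) + (v₁ + v₂)) := by
  simp only [map_sum, hU]
  refine Finset.sum_congr rfl fun c _ => ?_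
  refine Fintype.sum_equiv (Equiv.addLeft c) _ _ fun d => ?_
  rw [Equiv.coe_addLeft, Submodule.coe_add, add_add_add_comm]

end

/-- The transversal CNOT, i.e. the linear map permuting the standard basis by
`e_{(x,y)} ↦ e_{(x,x+y)}`, acts on two-block CSS basis states by
`U Ψ_{v₁,v₂} = Ψ_{v₁,v₁+v₂}`. -/
theorem transversal_CNOT_on_CSS_states
    {F : Type*} [Field F] [Fintype F] {n : ℕ}
    (C : Submodule F (Fin n → F))
    (U : (((Fin n → F) × (Fin n → F)) → ℂ) →ₗ[ℂ] (((Fin n → F) × (Fin n → F)) → ℂ))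
    (hU : ∀ p : (Fin n → F) × (Fin n → F), U (stdVec2 p) = stdVec2 (p.1, p.1 + p.2))
    (v₁ v₂ : Fin n → F) :
    U (psi2 C v₁ v₂) = psi2 C v₁ (v₁ + v₂) := by
  rw [psi2_eq_smul_sum, LinearMap.map_smul_of_tower, map_sum_stdVec2_of_cnot U hU,
    psi2_eq_smul_sum]
end

section
/- Let F be a field, k a natural number, and H a subgroup of GL k F (invertible k×k matrices over F). Let G₁₂ be the subgroup of GL (2k) F generated by the block matrices fromBlocks 1 0 1 1 and fromBlocks 1 1 0 1 together with all block-diagonal matrices fromBlocks S 0 0 T for S, T ∈ H. Then for every k×k matrix A lying in the additive subgroup of matrices generated by ℤ-linear combinations of the elements of H (i.e., A = ∑_π α_π M_π with α_π ∈ ℤ and M_π ∈ H), both fromBlocks 1 A 0 1 and fromBlocks 1 0 A 1 belong to G₁₂. -/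
open Matrix

/-! Conjugating `[[1, 1], [0, 1]]` by `[[S, 0], [0, 1]]` gives `[[1, S], [0, 1]]`, and
`A ↦ [[1, A], [0, 1]]` turns addition into multiplication, so the matrices `A` it sends into
`G₁₂` form an additive subgroup containing `H`. The lower triangular case is symmetric. -/

theorem MonoidHom.map_ofAdd_mem_of_mem_addClosure {A G : Type*} [AddGroup A] [Group G]
    (f : Multiplicative A →* G) {K : Subgroup G} {s : Set A}
    (hs : ∀ a ∈ s, f (.ofAdd a) ∈ K) {a : A} (ha : a ∈ AddSubgroup.closure s) :
    f (.ofAdd a) ∈ K := by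
  have ha' : Multiplicative.ofAdd a ∈ (AddSubgroup.closure s).toSubgroup := ha
  rw [AddSubgroup.toSubgroup_closure] at ha'
  exact (Subgroup.closure_le (K.comap f)).2 hs ha'

namespace Matrix.GeneralLinearGroup

variable {m n R : Type*} [Fintype m] [DecidableEq m] [Fintype n] [DecidableEq n] [Ring R]

def fromBlocksDiagonal : GL m R × GL n R →* GL (m ⊕ n) R :=
  (Units.map
    { toFun := fun p => fromBlocks p.1 0 0 p.2
      map_one' := fromBlocks_one
      map_mul' := fun p q => by simp [fromBlocks_multiply] }).comp
    MulEquiv.prodUnits.symm.toMonoidHom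

@[simp]
theorem val_fromBlocksDiagonal (S : GL m R) (T : GL n R) :
    (fromBlocksDiagonal (S, T) : Matrix (m ⊕ n) (m ⊕ n) R) = fromBlocks S 0 0 T := rfl

def fromBlocksUpper : Multiplicative (Matrix m n R) →* GL (m ⊕ n) R :=
  MonoidHom.toHomUnits
    { toFun := fun A => fromBlocks 1 A.toAdd 0 1
      map_one' := fromBlocks_one
      map_mul' := fun A B => by simp [fromBlocks_multiply, add_comm] }

def fromBlocksLower : Multiplicative (Matrix n m R) →* GL (m ⊕ n) R :=
  MonoidHom.toHomUnits
    { toFun := fun A => fromBlocks 1 0 A.toAdd 1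
      map_one' := fromBlocks_one
      map_mul' := fun A B => by simp [fromBlocks_multiply, add_comm] }

@[simp]
theorem val_fromBlocksUpper (A : Matrix m n R) :
    (fromBlocksUpper (.ofAdd A) : Matrix (m ⊕ n) (m ⊕ n) R) = fromBlocks 1 A 0 1 := rfl

@[simp]
theorem val_fromBlocksLower (A : Matrix n m R) :
    (fromBlocksLower (.ofAdd A) : Matrix (m ⊕ n) (m ⊕ n) R) = fromBlocks 1 0 A 1 := rfl

theorem fromBlocksUpper_conj (S : GL m R) (T : GL n R) (A : Matrix m n R) :
    fromBlocksDiagonal (S, T) * fromBlocksUpper (.ofAdd A) * (fromBlocksDiagonal (S, T))⁻¹ =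
      fromBlocksUpper (.ofAdd ((S : Matrix m m R) * A * ((T⁻¹ : GL n R) : Matrix n n R))) := by
  ext1
  simp [← map_inv, fromBlocks_multiply, Matrix.mul_assoc]

theorem fromBlocksLower_conj (S : GL m R) (T : GL n R) (A : Matrix n m R) :
    fromBlocksDiagonal (S, T) * fromBlocksLower (.ofAdd A) * (fromBlocksDiagonal (S, T))⁻¹ =
      fromBlocksLower (.ofAdd ((T : Matrix n n R) * A * ((S⁻¹ : GL m R) : Matrix m m R))) := by
  ext1
  simp [← map_inv, fromBlocks_multiply, Matrix.mul_assoc]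

theorem fromBlocksUpper_mem_of_mem_addClosure {G : Subgroup (GL (n ⊕ n) R)} {s : Set (GL n R)}
    (hone : fromBlocksUpper (.ofAdd 1) ∈ G) (hdiag : ∀ S ∈ s, fromBlocksDiagonal (S, 1) ∈ G)
    {A : Matrix n n R} (hA : A ∈ AddSubgroup.closure ((↑) '' s)) :
    fromBlocksUpper (.ofAdd A) ∈ G := by
  refine fromBlocksUpper.map_ofAdd_mem_of_mem_addClosure ?_ hA
  rintro _ ⟨S, hS, rfl⟩
  simpa [fromBlocksUpper_conj] using
    mul_mem (mul_mem (hdiag S hS) hone) (inv_mem (hdiag S hS))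

theorem fromBlocksLower_mem_of_mem_addClosure {G : Subgroup (GL (n ⊕ n) R)} {s : Set (GL n R)}
    (hone : fromBlocksLower (.ofAdd 1) ∈ G) (hdiag : ∀ T ∈ s, fromBlocksDiagonal (1, T) ∈ G)
    {A : Matrix n n R} (hA : A ∈ AddSubgroup.closure ((↑) '' s)) :
    fromBlocksLower (.ofAdd A) ∈ G := by
  refine fromBlocksLower.map_ofAdd_mem_of_mem_addClosure ?_ hA
  rintro _ ⟨T, hT, rfl⟩
  simpa [fromBlocksLower_conj] using
    mul_mem (mul_mem (hdiag T hT) hone) (inv_mem (hdiag T hT))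

end Matrix.GeneralLinearGroup

/-- If `G₁₂` is generated by the transversal CNOTs `[[1,0],[1,1]]`, `[[1,1],[0,1]]`
and the block-diagonal matrices `[[S,0],[0,T]]` with `S, T ∈ H`, then for every
matrix `A` in the additive (ℤ-linear) span of `H`, both `[[1,A],[0,1]]` and
`[[1,0],[A,1]]` lie in `G₁₂`. -/
theorem blockTriangular_mem_of_mem_addClosure
    {F : Type*} [Field F] {k : ℕ}
    (H : Subgroup (Matrix.GeneralLinearGroup (Fin k) F))
    (G₁₂ : Subgroup (Matrix.GeneralLinearGroup (Fin k ⊕ Fin k) F))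
    (hG : G₁₂ = Subgroup.closure
      {g : Matrix.GeneralLinearGroup (Fin k ⊕ Fin k) F |
        ((g : Matrix (Fin k ⊕ Fin k) (Fin k ⊕ Fin k) F) =
          Matrix.fromBlocks 1 0 1 (1 : Matrix (Fin k) (Fin k) F)) ∨
        ((g : Matrix (Fin k ⊕ Fin k) (Fin k ⊕ Fin k) F) =
          Matrix.fromBlocks 1 (1 : Matrix (Fin k) (Fin k) F) 0 1) ∨
        (∃ S ∈ H, ∃ T ∈ H,
          (g : Matrix (Fin k ⊕ Fin k) (Fin k ⊕ Fin k) F) =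
            Matrix.fromBlocks (S : Matrix (Fin k) (Fin k) F) 0 0
              (T : Matrix (Fin k) (Fin k) F))})
    (A : Matrix (Fin k) (Fin k) F)
    (hA : A ∈ AddSubgroup.closure
      ((fun h : Matrix.GeneralLinearGroup (Fin k) F =>
        (h : Matrix (Fin k) (Fin k) F)) '' (H : Set _))) :
    (∃ g ∈ G₁₂, (g : Matrix (Fin k ⊕ Fin k) (Fin k ⊕ Fin k) F) =
        Matrix.fromBlocks 1 A 0 1) ∧
    (∃ g ∈ G₁₂, (g : Matrix (Fin k ⊕ Fin k) (Fin k ⊕ Fin k) F) =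
        Matrix.fromBlocks 1 0 A 1) := by
  subst hG
  refine
    ⟨⟨_, GeneralLinearGroup.fromBlocksUpper_mem_of_mem_addClosure ?_ (fun S hS => ?_) hA, rfl⟩,
      ⟨_, GeneralLinearGroup.fromBlocksLower_mem_of_mem_addClosure ?_ (fun T hT => ?_) hA, rfl⟩⟩
    <;> apply Subgroup.subset_closure
  · exact Or.inr (Or.inl rfl)
  · exact Or.inr (Or.inr ⟨S, hS, 1, H.one_mem, rfl⟩)
  · exact Or.inl rfl
  · exact Or.inr (Or.inr ⟨1, H.one_mem, T, hT, rfl⟩)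
end

section
/- Let F be a field, n a natural number, i, j, k ∈ Fin n with i ≠ k, and α, β ∈ F. Let E_{a,b} denote the n×n matrix with a single 1 in row a, column b (Matrix.stdBasisMatrix). Set M₁ = fromBlocks 1 (α • E_{i,j}) 0 1, M₁' = fromBlocks 1 (-α • E_{i,j}) 0 1, M₂ = fromBlocks 1 0 (β • E_{j,k}) 1, M₂' = fromBlocks 1 0 (-β • E_{j,k}) 1 (so M₁' = M₁⁻¹ and M₂' = M₂⁻¹). Then M₂' * M₁ * M₂ * M₁' = fromBlocks (1 + (α*β) • E_{i,k}) 0 0 1. -/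
open Matrix

namespace Matrix

variable {m n R : Type*} [Fintype m] [Fintype n] [DecidableEq m] [DecidableEq n] [Ring R]

theorem fromBlocks_one_upper_mul (B B' : Matrix m n R) :
    (fromBlocks 1 B 0 1 * fromBlocks 1 B' 0 1 : Matrix (m ⊕ n) (m ⊕ n) R) =
      fromBlocks 1 (B + B') 0 1 := by
  simp [fromBlocks_multiply, add_comm]

theorem fromBlocks_one_lower_mul (C C' : Matrix n m R) :
    (fromBlocks 1 0 C 1 * fromBlocks 1 0 C' 1 : Matrix (m ⊕ n) (m ⊕ n) R) =
      fromBlocks 1 0 (C + C') 1 := by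
  simp [fromBlocks_multiply]

theorem fromBlocks_one_upper_neg_mul (B : Matrix m n R) :
    fromBlocks 1 (-B) 0 1 * fromBlocks 1 B 0 1 = (1 : Matrix (m ⊕ n) (m ⊕ n) R) := by
  rw [fromBlocks_one_upper_mul, neg_add_cancel, fromBlocks_one]

theorem fromBlocks_one_lower_neg_mul (C : Matrix n m R) :
    fromBlocks 1 0 (-C) 1 * fromBlocks 1 0 C 1 = (1 : Matrix (m ⊕ n) (m ⊕ n) R) := by
  rw [fromBlocks_one_lower_mul, neg_add_cancel, fromBlocks_one]

/-- Without `C * B = 0` the commutator is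
`fromBlocks (1 + B * C) (-B * C * B) (-C * B * C) (1 - C * B + C * B * C * B)`. -/
theorem fromBlocks_lower_upper_commutator_of_mul_eq_zero {B : Matrix m n R} {C : Matrix n m R}
    (hCB : C * B = 0) :
    fromBlocks 1 0 (-C) 1 * fromBlocks 1 B 0 1 * fromBlocks 1 0 C 1 * fromBlocks 1 (-B) 0 1 =
      fromBlocks (1 + B * C) 0 0 1 := by
  have hBCB : B * C * B = 0 := by rw [Matrix.mul_assoc, hCB, Matrix.mul_zero]
  simp [fromBlocks_multiply, Matrix.add_mul, hCB, hBCB]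

end Matrix

/-- Commutator identity for block transvections: with `E_{a,b}` the matrix units,
`M₂⁻¹ * M₁ * M₂ * M₁⁻¹ = [[1 + αβ E_{i,k}, 0],[0, 1]]` for `i ≠ k`. -/
theorem transvection_commutator_identity
    {F : Type*} [Field F] {n : ℕ} (i j k : Fin n) (hik : i ≠ k) (α β : F) :
    (Matrix.fromBlocks 1 0 ((-β) • Matrix.single j k (1 : F)) 1) *
        (Matrix.fromBlocks 1 (α • Matrix.single i j (1 : F)) 0 1) *
        (Matrix.fromBlocks 1 0 (β • Matrix.single j k (1 : F)) 1) *
        (Matrix.fromBlocks 1 ((-α) • Matrix.single i j (1 : F)) 0 1) =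
      Matrix.fromBlocks (1 + (α * β) • Matrix.single i k (1 : F)) 0 0 1 ∧
    (Matrix.fromBlocks 1 ((-α) • Matrix.single i j (1 : F)) 0 1) *
        (Matrix.fromBlocks 1 (α • Matrix.single i j (1 : F)) 0 1) =
      (1 : Matrix ((Fin n) ⊕ (Fin n)) ((Fin n) ⊕ (Fin n)) F) ∧
    (Matrix.fromBlocks 1 0 ((-β) • Matrix.single j k (1 : F)) 1) *
        (Matrix.fromBlocks 1 0 (β • Matrix.single j k (1 : F)) 1) =
      (1 : Matrix ((Fin n) ⊕ (Fin n)) ((Fin n) ⊕ (Fin n)) F) := by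
  simp only [neg_smul, smul_single, smul_eq_mul, mul_one]
  have hCB : single j k β * single i j α = 0 := single_mul_single_of_ne (h := hik.symm) ..
  refine ⟨?_, fromBlocks_one_upper_neg_mul _, fromBlocks_one_lower_neg_mul _⟩
  rw [fromBlocks_lower_upper_commutator_of_mul_eq_zero hCB, single_mul_single_same]
end

section
/- Let G be the 7 × 22 matrix over ZMod 2 whose rows are: (1,0,0,0,1,0,0,0,0,1,1,0,0,0,1,0,1,0,1,0,1,0), (0,1,0,0,1,0,0,0,0,1,1,0,1,0,0,1,0,1,0,1,1,1), (0,0,1,0,1,0,0,0,0,1,0,1,0,0,1,1,0,1,1,0,0,0), (0,0,0,1,0,0,0,1,0,0,1,0,0,0,0,1,1,0,1,0,1,1), (0,0,0,0,0,1,0,1,0,1,0,1,1,1,1,1,1,0,0,0,1,0), (0,0,0,0,0,0,1,1,0,0,1,0,0,1,1,0,1,0,1,1,0,0), (0,0,0,0,0,0,0,0,1,1,1,1,1,1,1,1,1,1,1,1,1,1). Then G * Gᵀ = 0 over ZMod 2; equivalently, the linear code C ⊆ (Fin 22 → ZMod 2) spanned by the rows of G is self-orthogonal: C ≤ C⊥.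 -/
/-- The generator matrix of the classical self-orthogonal `[22,7,8]` code underlying
the CSS code `[[22,8,4]]`. -/
def G2278 : Matrix (Fin 7) (Fin 22) (ZMod 2) :=
  !![1,0,0,0,1,0,0,0,0,1,1,0,0,0,1,0,1,0,1,0,1,0;
     0,1,0,0,1,0,0,0,0,1,1,0,1,0,0,1,0,1,0,1,1,1;
     0,0,1,0,1,0,0,0,0,1,0,1,0,0,1,1,0,1,1,0,0,0;
     0,0,0,1,0,0,0,1,0,0,1,0,0,0,0,1,1,0,1,0,1,1;
     0,0,0,0,0,1,0,1,0,1,0,1,1,1,1,1,1,0,0,0,1,0;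
     0,0,0,0,0,0,1,1,0,0,1,0,0,1,1,0,1,0,1,1,0,0;
     0,0,0,0,0,0,0,0,1,1,1,1,1,1,1,1,1,1,1,1,1,1]

namespace Matrix

open Submodule

theorem dotProduct_eq_zero_of_mem_span_rows {m n R : Type*} [Fintype n] [CommSemiring R]
    {G : Matrix m n R} (hG : G * Gᵀ = 0) {x c : n → R} (hx : x ∈ span R (Set.range G))
    (hc : c ∈ span R (Set.range G)) : x ⬝ᵥ c = 0 := by
  induction hx, hc using span_induction₂ with
  | mem_mem x c hx hc =>
    obtain ⟨i, rfl⟩ := hx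
    obtain ⟨j, rfl⟩ := hc
    simpa only [mul_apply', transpose_apply, zero_apply] using congr_fun₂ hG i j
  | zero_left => exact zero_dotProduct _
  | zero_right => exact dotProduct_zero _
  | add_left x y c _ _ _ hx hy => rw [add_dotProduct, hx, hy, add_zero]
  | add_right x c d _ _ _ hc hd => rw [dotProduct_add, hc, hd, add_zero]
  | smul_left r x c _ _ hx => rw [smul_dotProduct, hx, smul_zero]
  | smul_right r x c _ _ hc => rw [dotProduct_smul, hc, smul_zero]

end Matrix

/-- The rows of `G2278` are pairwise orthogonal and self-orthogonal (`G * Gᵀ = 0`);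
equivalently, the code `C` spanned by the rows of `G` is self-orthogonal: `C ≤ C⊥`. -/
theorem code_22_7_8_self_orthogonal :
    G2278 * G2278.transpose = 0 ∧
    (∀ x ∈ Submodule.span (ZMod 2) (Set.range fun i => G2278 i),
      ∀ c ∈ Submodule.span (ZMod 2) (Set.range fun i => G2278 i),
        ∑ j, x j * c j = 0) := by
  have hG : G2278 * G2278.transpose = 0 := by decide
  exact ⟨hG, fun x hx c hc => Matrix.dotProduct_eq_zero_of_mem_span_rows hG hx hc⟩
end
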